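/- Let A be a finite abelian group and σ an automorphism of A. Every finite-dimensional complex irreducible representation of G = ℤ ⋉ A has dimension equal to the size of the σ-orbit of some character of A; in particular its dimension divides the order of σ (if σ has finite order). -/

import Mathlib

/-!
The translation `t = inr (ofAdd 1)` permutes the character spaces of `A`:
`ρ (t ^ k)` maps `V_χ` into `V_{χ ∘ σ^(-k)}`. Fix `χ` with `V_χ ≠ 0` and let `m` be the length
of its `σ`-orbit. The spaces `V_{χ ∘ σ^i}`, `i < m`, are independent and nonzero, so
`m ≤ dim V`. Conversely `t ^ m` preserves `V_χ` and has an eigenvector `u` there; the vectors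
`ρ (t ^ k) u` are joint eigenvectors of `A` and, up to scalars, only the first `m` of them
occur, so their span is a subrepresentation of dimension at most `m`, hence all of `V`.
Finally `m` divides the order of `σ` because `σ ^ orderOf σ = 1`.
-/

open SemidirectProduct

/-- A representation is irreducible: nontrivial and no proper nonzero invariant subspace. -/
def IsIrrep {k G V : Type*} [CommRing k] [Group G] [AddCommGroup V] [Module k V]
    (ρ : Representation k G V) : Prop :=
  Nontrivial V ∧ ∀ W : Submodule k V, (∀ g, ∀ v ∈ W, ρ g v ∈ W) → W = ⊥ ∨ W = ⊤

/-- The simultaneous eigenspace `V_χ` for a character `χ` of an abelian group. -/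
def charSpace {A V : Type*} [CommGroup A] [AddCommGroup V] [Module ℂ V]
    (ρ : Representation ℂ A V) (χ : A →* ℂˣ) : Submodule ℂ V where
  carrier := {v | ∀ a, ρ a v = (χ a : ℂ) • v}
  add_mem' := by intro x y hx hy a; simp [hx a, hy a, smul_add]
  zero_mem' := by intro a; simp
  smul_mem' := by intro c x hx a; simp [hx a, smul_comm c]

section Characters

variable {A V : Type*} [CommGroup A] [AddCommGroup V] [Module ℂ V] (ρ : Representation ℂ A V)

theorem Representation.commute_apply (a b : A) : Commute (ρ a) (ρ b) := by
  simp only [Commute, SemiconjBy, ← map_mul, mul_comm a b]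

theorem charSpace_le_iInf_maxGenEigenspace (χ : A →* ℂˣ) :
    charSpace ρ χ ≤ ⨅ a, Module.End.maxGenEigenspace (ρ a) (χ a : ℂ) := fun v hv ↦
  (Module.End.mem_iInf_maxGenEigenspace_iff _ _ _).mpr fun a ↦ ⟨1, by simp [hv a]⟩

theorem iSupIndep_charSpace : iSupIndep (charSpace ρ) := by
  have hind := Module.End.independent_iInf_maxGenEigenspace_of_forall_mapsTo (fun a ↦ ρ a)
    fun a b μ ↦ Module.End.mapsTo_maxGenEigenspace_of_comm (ρ.commute_apply b a) μ
  have hinj : Function.Injective fun (χ : A →* ℂˣ) (a : A) ↦ (χ a : ℂ) := fun χ ψ h ↦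
    MonoidHom.ext fun a ↦ Units.ext (congrFun h a)
  exact (hind.comp hinj).mono (charSpace_le_iInf_maxGenEigenspace ρ)

theorem Representation.isFinitelySemisimple_apply [Fintype A] (a : A) :
    Module.End.IsFinitelySemisimple (ρ a) := by
  refine (Module.End.isSemisimple_of_squarefree_aeval_eq_zero
    (p := Polynomial.X ^ Fintype.card A - 1) ?_ ?_).isFinitelySemisimple
  · exact (Polynomial.X_pow_sub_one_separable_iff.mpr (by simp)).squarefree
  · rw [map_sub, map_pow, Polynomial.aeval_X, ← map_pow, pow_card_eq_one, map_one, map_one,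
      sub_self]

theorem exists_ne_zero_forall_apply_eq_smul [Fintype A] [FiniteDimensional ℂ V] [Nontrivial V] :
    ∃ v ≠ (0 : V), ∃ μ : A → ℂ, ∀ a, ρ a v = μ a • v := by
  have hsup : ⨆ μ : A → ℂ, ⨅ a, Module.End.maxGenEigenspace (ρ a) (μ a) = ⊤ :=
    Module.End.iSup_iInf_maxGenEigenspace_eq_top_of_iSup_maxGenEigenspace_eq_top_of_commute _
      (fun a b _ ↦ ρ.commute_apply a b) fun a ↦ Module.End.iSup_maxGenEigenspace_eq_top _
  obtain ⟨μ, hμ⟩ : ∃ μ : A → ℂ, ⨅ a, Module.End.maxGenEigenspace (ρ a) (μ a) ≠ ⊥ := by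
    by_contra! h
    simp [iSup_congr h] at hsup
  obtain ⟨v, hv, hv0⟩ := Submodule.exists_mem_ne_zero_of_ne_bot hμ
  refine ⟨v, hv0, μ, fun a ↦ Module.End.mem_eigenspace_iff.mp ?_⟩
  rw [← (ρ.isFinitelySemisimple_apply a).maxGenEigenspace_eq_eigenspace]
  exact iInf_le (fun a ↦ Module.End.maxGenEigenspace (ρ a) (μ a)) a hv

theorem exists_charSpace_ne_bot [Fintype A] [FiniteDimensional ℂ V] [Nontrivial V] :
    ∃ χ : A →* ℂˣ, charSpace ρ χ ≠ ⊥ := by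
  obtain ⟨v, hv0, μ, hμ⟩ := exists_ne_zero_forall_apply_eq_smul ρ
  have hinj := smul_left_injective ℂ hv0
  let χ : A →* ℂ :=
    { toFun := μ
      map_one' := hinj (by simp [← hμ])
      map_mul' := fun a b ↦ hinj <| show μ (a * b) • v = (μ a * μ b) • v by
        rw [← hμ, map_mul, Module.End.mul_apply, hμ, map_smul, hμ, smul_smul, mul_comm] }
  exact ⟨χ.toHomUnits, (Submodule.ne_bot_iff _).mpr ⟨v, hμ, hv0⟩⟩

end Characters

section CharShift

open MulAction Function

variable {A M : Type*} [Group A] [CommMonoid M]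

-- `χ ↦ χ ∘ σ`
def charShift (σ : MulAut A) : Equiv.Perm (A →* M) :=
  (MulEquiv.monoidHomCongrLeft σ.symm).toEquiv

theorem charShift_zpow_apply (σ : MulAut A) (k : ℤ) (χ : A →* M) :
    (charShift σ ^ k) χ = χ.comp (σ ^ k).toMonoidHom := by
  induction k using Int.induction_on generalizing χ with
  | zero => rfl
  | succ k ih =>
    rw [zpow_add_one, Equiv.Perm.mul_apply, ih, add_comm, zpow_add, zpow_one]
    rfl
  | pred k ih =>
    rw [zpow_sub_one, Equiv.Perm.mul_apply, ih, sub_eq_neg_add, zpow_add, zpow_neg_one]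
    rfl

theorem minimalPeriod_charShift_dvd_orderOf (σ : MulAut A) (χ : A →* M) :
    minimalPeriod (charShift σ) χ ∣ orderOf σ := by
  refine (pow_smul_eq_iff_minimalPeriod_dvd (a := (charShift σ : Equiv.Perm (A →* M)))).mp ?_
  rw [Equiv.Perm.smul_def, ← zpow_natCast, charShift_zpow_apply, zpow_natCast,
    pow_orderOf_eq_one]
  rfl

theorem card_setOf_exists_eq_comp_zpow (σ : MulAut A) (χ : A →* M) :
    Nat.card {χ' | ∃ k : ℤ, χ' = χ.comp (σ ^ k).toMonoidHom} =
      minimalPeriod (charShift σ) χ := by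
  have : {χ' | ∃ k : ℤ, χ' = χ.comp (σ ^ k).toMonoidHom} =
      orbit (Subgroup.zpowers (charShift σ : Equiv.Perm (A →* M))) χ := by
    ext χ'
    constructor
    · rintro ⟨k, rfl⟩
      exact ⟨⟨_, k, rfl⟩, charShift_zpow_apply σ k χ⟩
    · rintro ⟨⟨_, k, rfl⟩, rfl⟩
      exact ⟨k, charShift_zpow_apply σ k χ⟩
  rw [this, Nat.card_congr (orbitZPowersEquiv _ _), Nat.card_zmod]
  rfl

end CharShift

theorem Submodule.exists_ne_zero_apply_eq_smul_of_mapsTo {V : Type*} [AddCommGroup V]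
    [Module ℂ V] [FiniteDimensional ℂ V] {p : Submodule ℂ V} (hp : p ≠ ⊥)
    (f : Module.End ℂ V) (hf : ∀ v ∈ p, f v ∈ p) :
    ∃ u ∈ p, u ≠ 0 ∧ ∃ μ : ℂ, f u = μ • u := by
  have : Nontrivial p := Submodule.nontrivial_iff_ne_bot.mpr hp
  obtain ⟨μ, hμ⟩ := Module.End.exists_eigenvalue (f.restrict hf)
  obtain ⟨u, hu⟩ := hμ.exists_hasEigenvector
  exact ⟨u, u.2, by simpa using hu.2, μ, congrArg Subtype.val hu.apply_eq_smul⟩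

theorem Representation.apply_zpow_of_apply_eq_smul {k G V : Type*} [Field k] [Group G]
    [AddCommGroup V] [Module k V] (ρ : Representation k G V) {g : G} {u : V} {μ : k}
    (hu : ρ g u = μ • u) (q : ℤ) : ρ (g ^ q) u = μ ^ q • u := by
  rcases eq_or_ne u 0 with rfl | hu0
  · simp
  have hμ : μ ≠ 0 := by
    rintro rfl
    exact hu0 ((ρ.apply_bijective g).injective (by rw [hu, zero_smul, map_zero]))
  induction q using Int.induction_on with
  | zero => simp
  | succ q ih =>
    rw [zpow_add_one, map_mul, Module.End.mul_apply, hu, map_smul, ih, smul_smul,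
      zpow_add_one₀ hμ, mul_comm]
  | pred q ih =>
    calc ρ (g ^ (-(q : ℤ) - 1)) u = μ⁻¹ • ρ (g ^ (-(q : ℤ) - 1)) (μ • u) := by
          rw [map_smul, inv_smul_smul₀ hμ]
      _ = μ⁻¹ • ρ (g ^ (-(q : ℤ))) u := by
          rw [← hu, ← Module.End.mul_apply, ← map_mul, ← zpow_add_one, sub_add_cancel]
      _ = μ ^ (-(q : ℤ) - 1) • u := by
          rw [ih, smul_smul, zpow_sub_one₀ hμ, mul_comm]

section SemidirectProduct

open Function MulAction Multiplicative Module

variable {A V : Type*} [CommGroup A] [AddCommGroup V] [Module ℂ V] {σ : MulAut A}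
  (ρ : Representation ℂ (A ⋊[zpowersHom (MulAut A) σ] Multiplicative ℤ) V)

theorem SemidirectProduct.inl_mul_inr_ofAdd (a : A) (k : ℤ) :
    (inl a * inr (ofAdd k) : A ⋊[zpowersHom (MulAut A) σ] Multiplicative ℤ) =
      inr (ofAdd k) * inl ((σ ^ (-k)) a) := by
  have h := inl_aut (φ := zpowersHom (MulAut A) σ) (ofAdd k) ((σ ^ (-k)) a)
  rw [zpowersHom_apply, toAdd_ofAdd, ← MulAut.mul_apply, ← zpow_add, add_neg_cancel,
    zpow_zero, MulAut.one_apply] at h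
  rw [h, map_inv, inv_mul_cancel_right]

theorem apply_inl_of_mem_charSpace {χ : A →* ℂˣ} {v : V}
    (hv : v ∈ charSpace (ρ.comp inl) χ) (a : A) : ρ (inl a) v = (χ a : ℂ) • v :=
  hv a

theorem apply_inr_mem_charSpace {χ : A →* ℂˣ} {v : V} (hv : v ∈ charSpace (ρ.comp inl) χ)
    (k : ℤ) : ρ (inr (ofAdd k)) v ∈ charSpace (ρ.comp inl) ((charShift σ ^ (-k)) χ) := by
  intro a
  change (ρ (inl a) * ρ (inr (ofAdd k))) v = _
  rw [← map_mul, inl_mul_inr_ofAdd, map_mul, Module.End.mul_apply,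
    apply_inl_of_mem_charSpace ρ hv, map_smul, charShift_zpow_apply]
  rfl

theorem charSpace_charShift_zpow_ne_bot {χ : A →* ℂˣ} (hχ : charSpace (ρ.comp inl) χ ≠ ⊥)
    (k : ℤ) : charSpace (ρ.comp inl) ((charShift σ ^ k) χ) ≠ ⊥ := by
  obtain ⟨v, hv, hv0⟩ := Submodule.exists_mem_ne_zero_of_ne_bot hχ
  refine (Submodule.ne_bot_iff _).mpr ⟨ρ (inr (ofAdd (-k))) v, ?_, ?_⟩
  · simpa using apply_inr_mem_charSpace ρ hv (-k)
  · rwa [(ρ.apply_bijective _).injective.ne_iff' (map_zero _)]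

theorem minimalPeriod_charShift_le_finrank [FiniteDimensional ℂ V] {χ : A →* ℂˣ}
    (hχ : charSpace (ρ.comp inl) χ ≠ ⊥) :
    minimalPeriod (charShift σ) χ ≤ finrank ℂ V := by
  have hind := iSupIndep_charSpace (ρ.comp inl)
  let := hind.fintypeNeBotOfFiniteDimensional
  calc minimalPeriod (charShift σ) χ
      = Nat.card {χ' | ∃ k : ℤ, χ' = χ.comp (σ ^ k).toMonoidHom} :=
        (card_setOf_exists_eq_comp_zpow σ χ).symm
    _ ≤ Nat.card {χ' | charSpace (ρ.comp inl) χ' ≠ ⊥} := by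
        refine Nat.card_mono (Finite.of_fintype {χ' // charSpace (ρ.comp inl) χ' ≠ ⊥}) ?_
        rintro _ ⟨k, rfl⟩
        simpa only [Set.mem_ofPred_eq, charShift_zpow_apply] using
          charSpace_charShift_zpow_ne_bot ρ hχ k
    _ = Fintype.card {χ' // charSpace (ρ.comp inl) χ' ≠ ⊥} :=
        Nat.card_eq_fintype_card (α := {χ' // charSpace (ρ.comp inl) χ' ≠ ⊥})
    _ ≤ finrank ℂ V := hind.subtype_ne_bot_le_finrank

theorem apply_inr_mem_span_of_apply_eq_smul {u : V} {μ : ℂ} {m : ℕ} (hm : 0 < m)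
    (hu : ρ (inr (ofAdd (m : ℤ))) u = μ • u) (k : ℤ) :
    ρ (inr (ofAdd k)) u ∈
      Submodule.span ℂ (Set.range fun i : Fin m ↦ ρ (inr (ofAdd ((i : ℕ) : ℤ))) u) := by
  have hk : (inr (ofAdd k) : A ⋊[zpowersHom (MulAut A) σ] Multiplicative ℤ) =
      inr (ofAdd (k % m)) * inr (ofAdd (m : ℤ)) ^ (k / m) := by
    rw [← map_zpow, ← map_mul, ← ofAdd_zsmul, ← ofAdd_add, smul_eq_mul,
      Int.emod_add_ediv_mul]
  rw [hk, map_mul, Module.End.mul_apply, ρ.apply_zpow_of_apply_eq_smul hu, map_smul]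
  have hr := Int.emod_nonneg k (Int.natCast_ne_zero.mpr hm.ne')
  have hrm := Int.emod_lt_of_pos k (Int.natCast_pos.mpr hm)
  refine Submodule.smul_mem _ _ (Submodule.subset_span ⟨⟨(k % m).toNat, by omega⟩, ?_⟩)
  simp only [Int.toNat_of_nonneg hr]

theorem span_range_apply_inr_eq_top (hρ : IsIrrep ρ) {χ : A →* ℂˣ} {u : V}
    (hu : u ∈ charSpace (ρ.comp inl) χ) (hu0 : u ≠ 0) :
    Submodule.span ℂ (Set.range fun k : ℤ ↦ ρ (inr (ofAdd k)) u) = ⊤ := by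
  set W := Submodule.span ℂ (Set.range fun k : ℤ ↦ ρ (inr (ofAdd k)) u)
  have hinv (g) : W ≤ W.comap (ρ g) := by
    refine Submodule.span_le.mpr (Set.range_subset_iff.mpr fun k ↦ ?_)
    have hg : g * inr (ofAdd k) = inl g.left * inr (ofAdd (toAdd g.right + k)) := by
      rw [← inl_left_mul_inr_right g, mul_assoc, ← map_mul, ofAdd_add, ofAdd_toAdd]
      simp
    change (ρ g * ρ (inr (ofAdd k))) u ∈ W
    rw [← map_mul, hg, map_mul, Module.End.mul_apply,
      apply_inl_of_mem_charSpace ρ (apply_inr_mem_charSpace ρ hu _)]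
    exact W.smul_mem _ (Submodule.subset_span ⟨_, rfl⟩)
  refine (hρ.2 W fun g v hv ↦ hinv g hv).resolve_left fun hW ↦ hu0 ?_
  have hu : ρ (inr (ofAdd 0)) u ∈ W := Submodule.subset_span ⟨0, rfl⟩
  simpa [hW] using hu

theorem finrank_le_minimalPeriod_charShift [FiniteDimensional ℂ V] (hρ : IsIrrep ρ)
    {χ : A →* ℂˣ} (hχ : charSpace (ρ.comp inl) χ ≠ ⊥)
    (hm : 0 < minimalPeriod (charShift σ) χ) :
    finrank ℂ V ≤ minimalPeriod (charShift σ) χ := by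
  set m := minimalPeriod (charShift σ) χ
  have hχm : (charShift σ ^ (-(m : ℤ))) χ = χ :=
    (zpow_smul_eq_iff_minimalPeriod_dvd (a := (charShift σ : Equiv.Perm (A →* ℂˣ)))).mpr
      (dvd_neg.mpr dvd_rfl)
  have hmaps (v) (hv : v ∈ charSpace (ρ.comp inl) χ) :
      ρ (inr (ofAdd (m : ℤ))) v ∈ charSpace (ρ.comp inl) χ :=
    hχm ▸ apply_inr_mem_charSpace ρ hv m
  obtain ⟨u, hu, hu0, μ, hμ⟩ := Submodule.exists_ne_zero_apply_eq_smul_of_mapsTo hχ _ hmaps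
  have hspan : (⊤ : Submodule ℂ V) ≤
      Submodule.span ℂ (Set.range fun i : Fin m ↦ ρ (inr (ofAdd ((i : ℕ) : ℤ))) u) := by
    rw [← span_range_apply_inr_eq_top ρ hρ hu hu0, Submodule.span_le, Set.range_subset_iff]
    exact apply_inr_mem_span_of_apply_eq_smul ρ hm hμ
  calc finrank ℂ V = finrank ℂ (⊤ : Submodule ℂ V) := (finrank_top ℂ V).symm
    _ ≤ m := (Submodule.finrank_mono hspan).trans ((finrank_range_le_card _).trans_eq
        (Fintype.card_fin m))

end SemidirectProduct

/-- The dimension of any finite-dimensional complex irreducible representation of `ℤ ⋉ A`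
equals the size of the `σ`-orbit of some character of `A` occurring in it; in particular,
if `σ` has finite order, the dimension divides the order of `σ`. -/
theorem stmt3 {A V : Type} [CommGroup A] [Fintype A] [AddCommGroup V] [Module ℂ V]
    [FiniteDimensional ℂ V] (σ : MulAut A)
    (ρ : Representation ℂ (A ⋊[zpowersHom (MulAut A) σ] Multiplicative ℤ) V)
    (hirr : IsIrrep ρ) :
    (∃ χ : A →* ℂˣ, charSpace (ρ.comp inl) χ ≠ ⊥ ∧
        Module.finrank ℂ V =
          Nat.card {χ' : A →* ℂˣ | ∃ k : ℤ, χ' = χ.comp (σ ^ k).toMonoidHom}) ∧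
    (IsOfFinOrder σ → Module.finrank ℂ V ∣ orderOf σ) := by
  have : Nontrivial V := hirr.1
  obtain ⟨χ, hχ⟩ := exists_charSpace_ne_bot (ρ.comp inl)
  have hdvd := minimalPeriod_charShift_dvd_orderOf σ χ
  have hpos := Nat.pos_of_dvd_of_pos hdvd (orderOf_pos σ)
  have hrank : Module.finrank ℂ V = Function.minimalPeriod (charShift σ) χ :=
    (finrank_le_minimalPeriod_charShift ρ hirr hχ hpos).antisymm
      (minimalPeriod_charShift_le_finrank ρ hχ)
  exact ⟨⟨χ, hχ, hrank.trans (card_setOf_exists_eq_comp_zpow σ χ).symm⟩, fun _ ↦ hrank ▸ hdvd⟩
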